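/- Let U, V, M, Y : ℝ³ → ℝ be smooth functions of (θ, η, v), D_η = e^U(∂_η + Y ∂_θ), φ = D_η M − e^U Y_θ, ψ = D_η(U+V). Suppose the equation (φ+ψ)_θ = ψ (U+V)_θ holds. Then applying ∂_θ to (φ+ψ) and using the commutator identity [∂_θ, D_η] = U_θ D_η + e^U Y_θ ∂_θ, the quantity A = D_η φ + D_η ψ − ½φ² − φψ − ψ² satisfies A_θ = (U+V)_θ (D_η ψ − φψ − ψ²) + U_θ (D_η φ + D_η ψ − ψ²). -/

import Mathlib

noncomputable section

/-- ∂θ : partial derivative in the first (fast phase) variable θ. -/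
def pθ (f : ℝ × ℝ × ℝ → ℝ) (x : ℝ × ℝ × ℝ) : ℝ := fderiv ℝ f x (1, 0, 0)

/-- ∂η : partial derivative in the second (intermediate transverse) variable η. -/
def pη (f : ℝ × ℝ × ℝ → ℝ) (x : ℝ × ℝ × ℝ) : ℝ := fderiv ℝ f x (0, 1, 0)

/-- ∂v : partial derivative in the third (slow ray) variable v. -/
def pv (f : ℝ × ℝ × ℝ → ℝ) (x : ℝ × ℝ × ℝ) : ℝ := fderiv ℝ f x (0, 0, 1)

/-- The transverse derivative Dη f = e^U (∂η f + Y ∂θ f). -/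
def Dder (U Y f : ℝ × ℝ × ℝ → ℝ) (x : ℝ × ℝ × ℝ) : ℝ :=
  Real.exp (U x) * (pη f x + Y x * pθ f x)

/-- φ = Dη M − e^U Y_θ. -/
def phiF (U M Y : ℝ × ℝ × ℝ → ℝ) (x : ℝ × ℝ × ℝ) : ℝ :=
  Dder U Y M x - Real.exp (U x) * pθ Y x

/-- ψ = Dη (U + V). -/
def psiF (U V Y : ℝ × ℝ × ℝ → ℝ) (x : ℝ × ℝ × ℝ) : ℝ :=
  Dder U Y (fun p => U p + V p) x

open ContDiff

section Helpers

variable {f g U Y : ℝ × ℝ × ℝ → ℝ} {x : ℝ × ℝ × ℝ}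

lemma smooth_pθ (hf : ContDiff ℝ ∞ f) : ContDiff ℝ ∞ (pθ f) :=
  (hf.fderiv_right le_rfl).clm_apply contDiff_const

lemma smooth_pη (hf : ContDiff ℝ ∞ f) : ContDiff ℝ ∞ (pη f) :=
  (hf.fderiv_right le_rfl).clm_apply contDiff_const

lemma pθ_add (hf : ContDiff ℝ ∞ f) (hg : ContDiff ℝ ∞ g) :
    pθ (fun p => f p + g p) x = pθ f x + pθ g x := by
  unfold pθ
  rw [fderiv_fun_add ((hf.differentiable (by simp)).differentiableAt)
    ((hg.differentiable (by simp)).differentiableAt)]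
  rfl

lemma pη_add (hf : ContDiff ℝ ∞ f) (hg : ContDiff ℝ ∞ g) :
    pη (fun p => f p + g p) x = pη f x + pη g x := by
  unfold pη
  rw [fderiv_fun_add ((hf.differentiable (by simp)).differentiableAt)
    ((hg.differentiable (by simp)).differentiableAt)]
  rfl

lemma pθ_sub (hf : ContDiff ℝ ∞ f) (hg : ContDiff ℝ ∞ g) :
    pθ (fun p => f p - g p) x = pθ f x - pθ g x := by
  unfold pθ
  rw [fderiv_fun_sub ((hf.differentiable (by simp)).differentiableAt)
    ((hg.differentiable (by simp)).differentiableAt)]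
  rfl

lemma pθ_mul (hf : ContDiff ℝ ∞ f) (hg : ContDiff ℝ ∞ g) :
    pθ (fun p => f p * g p) x = f x * pθ g x + g x * pθ f x := by
  unfold pθ
  rw [fderiv_fun_mul ((hf.differentiable (by simp)).differentiableAt)
    ((hg.differentiable (by simp)).differentiableAt)]
  simp [mul_comm]

lemma pη_mul (hf : ContDiff ℝ ∞ f) (hg : ContDiff ℝ ∞ g) :
    pη (fun p => f p * g p) x = f x * pη g x + g x * pη f x := by
  unfold pη
  rw [fderiv_fun_mul ((hf.differentiable (by simp)).differentiableAt)
    ((hg.differentiable (by simp)).differentiableAt)]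
  simp [mul_comm]

lemma pθ_sq (hf : ContDiff ℝ ∞ f) :
    pθ (fun p => (f p)^2) x = 2 * f x * pθ f x := by
  have h : (fun p => (f p)^2) = fun p => f p * f p := by funext p; ring
  rw [h, pθ_mul hf hf]; ring

lemma pθ_const_mul_sq (C : ℝ) (hf : ContDiff ℝ ∞ f) :
    pθ (fun p => C * (f p)^2) x = C * (2 * f x * pθ f x) := by
  have h : (fun p => C * (f p)^2) = fun p => (C * f p) * f p := by funext p; ring
  have hc0 : pθ (fun _ : ℝ × ℝ × ℝ => C) x = 0 := by unfold pθ; simp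
  rw [h, pθ_mul (contDiff_const.mul hf) hf, pθ_mul contDiff_const hf, hc0]
  ring

lemma pθ_exp (hf : ContDiff ℝ ∞ f) :
    pθ (fun p => Real.exp (f p)) x = Real.exp (f x) * pθ f x := by
  unfold pθ
  rw [fderiv_exp ((hf.differentiable (by simp)).differentiableAt)]
  simp

lemma pθ_pη_symm (hf : ContDiff ℝ ∞ f) : pθ (pη f) x = pη (pθ f) x := by
  have hsym := (hf.contDiffAt (x := x)).isSymmSndFDerivAt (by simp [minSmoothness_of_isRCLikeNormedField]; exact WithTop.coe_le_coe.mpr le_top)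
  have key : ∀ v w : ℝ × ℝ × ℝ,
      fderiv ℝ (fun y => fderiv ℝ f y v) x w = fderiv ℝ (fderiv ℝ f) x w v := by
    intro v w
    rw [fderiv_clm_apply (((hf.fderiv_right (m := ∞) le_rfl).differentiable
      (by simp)).differentiableAt) (differentiableAt_const v)]
    simp
  unfold pθ pη
  rw [key, key, hsym.eq]

lemma smooth_exp (hU : ContDiff ℝ ∞ U) : ContDiff ℝ ∞ (fun p => Real.exp (U p)) :=
  Real.contDiff_exp.comp hU

lemma smooth_Dder (hU : ContDiff ℝ ∞ U) (hY : ContDiff ℝ ∞ Y) (hf : ContDiff ℝ ∞ f) :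
    ContDiff ℝ ∞ (Dder U Y f) :=
  (smooth_exp hU).mul ((smooth_pη hf).add (hY.mul (smooth_pθ hf)))

lemma Dder_add (hU : ContDiff ℝ ∞ U) (hY : ContDiff ℝ ∞ Y)
    (hf : ContDiff ℝ ∞ f) (hg : ContDiff ℝ ∞ g) :
    Dder U Y (fun p => f p + g p) x = Dder U Y f x + Dder U Y g x := by
  simp only [Dder, pθ_add hf hg, pη_add hf hg]; ring

lemma Dder_mul (hU : ContDiff ℝ ∞ U) (hY : ContDiff ℝ ∞ Y)
    (hf : ContDiff ℝ ∞ f) (hg : ContDiff ℝ ∞ g) :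
    Dder U Y (fun p => f p * g p) x = f x * Dder U Y g x + g x * Dder U Y f x := by
  simp only [Dder, pθ_mul hf hg, pη_mul hf hg]; ring

/-- Commutator identity: [∂θ, Dη] = U_θ Dη + e^U Y_θ ∂θ. -/
lemma pθ_Dder (hU : ContDiff ℝ ∞ U) (hY : ContDiff ℝ ∞ Y) (hf : ContDiff ℝ ∞ f) :
    pθ (Dder U Y f) x
      = Dder U Y (pθ f) x + pθ U x * Dder U Y f x
        + Real.exp (U x) * pθ Y x * pθ f x := by
  have h1 : pθ (Dder U Y f) x
      = pθ (fun p => Real.exp (U p) * (pη f p + Y p * pθ f p)) x := rfl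
  rw [h1, pθ_mul (smooth_exp hU) ((smooth_pη hf).add (hY.mul (smooth_pθ hf))),
    pθ_exp hU, pθ_add (smooth_pη hf) (hY.mul (smooth_pθ hf)),
    pθ_mul hY (smooth_pθ hf), pθ_pη_symm hf]
  simp only [Dder]
  ring

lemma pθ_big {a b c d : ℝ × ℝ × ℝ → ℝ} (ha : ContDiff ℝ ∞ a) (hb : ContDiff ℝ ∞ b)
    (hc : ContDiff ℝ ∞ c) (hd : ContDiff ℝ ∞ d) :
    pθ (fun p => a p + b p - (1/2) * (c p)^2 - c p * d p - (d p)^2) x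
      = pθ a x + pθ b x - (1/2) * (2 * c x * pθ c x)
        - (c x * pθ d x + d x * pθ c x) - 2 * d x * pθ d x := by
  have t1 : pθ (fun p => a p + b p - (1/2) * (c p)^2 - c p * d p - (d p)^2) x
      = pθ (fun p => a p + b p - (1/2) * (c p)^2 - c p * d p) x
        - pθ (fun p => (d p)^2) x :=
    pθ_sub (((ha.add hb).sub (contDiff_const.mul (hc.pow 2))).sub (hc.mul hd)) (hd.pow 2)
  have t2 : pθ (fun p => a p + b p - (1/2) * (c p)^2 - c p * d p) x
      = pθ (fun p => a p + b p - (1/2) * (c p)^2) x - pθ (fun p => c p * d p) x :=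
    pθ_sub ((ha.add hb).sub (contDiff_const.mul (hc.pow 2))) (hc.mul hd)
  have t3 : pθ (fun p => a p + b p - (1/2) * (c p)^2) x
      = pθ (fun p => a p + b p) x - pθ (fun p => (1/2) * (c p)^2) x :=
    pθ_sub (ha.add hb) (contDiff_const.mul (hc.pow 2))
  rw [t1, t2, t3, pθ_add ha hb, pθ_const_mul_sq (1/2) hc, pθ_mul hc hd, pθ_sq hd]

end Helpers

/-- The θ-derivative of A = Dη φ + Dη ψ − ½φ² − φψ − ψ², given (φ+ψ)_θ = ψ(U+V)_θ. -/
theorem A_theta_identity (U V M Y : ℝ × ℝ × ℝ → ℝ)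
    (hU : ContDiff ℝ (⊤ : ℕ∞) U) (hV : ContDiff ℝ (⊤ : ℕ∞) V) (hM : ContDiff ℝ (⊤ : ℕ∞) M)
    (hY : ContDiff ℝ (⊤ : ℕ∞) Y)
    (hYeq : ∀ x : ℝ × ℝ × ℝ,
      pθ (fun p => phiF U M Y p + psiF U V Y p) x
        = psiF U V Y x * pθ (fun p => U p + V p) x) :
    ∀ x : ℝ × ℝ × ℝ,
      pθ (fun p => Dder U Y (phiF U M Y) p + Dder U Y (psiF U V Y) p
            - (1/2) * (phiF U M Y p)^2 - phiF U M Y p * psiF U V Y p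
            - (psiF U V Y p)^2) x
        = pθ (fun p => U p + V p) x
            * (Dder U Y (psiF U V Y) x - phiF U M Y x * psiF U V Y x - (psiF U V Y x)^2)
          + pθ U x
            * (Dder U Y (phiF U M Y) x + Dder U Y (psiF U V Y) x - (psiF U V Y x)^2) := by
  have hU' : ContDiff ℝ ∞ U := hU.of_le (by simp)
  have hV' : ContDiff ℝ ∞ V := hV.of_le (by simp)
  have hM' : ContDiff ℝ ∞ M := hM.of_le (by simp)
  have hY' : ContDiff ℝ ∞ Y := hY.of_le (by simp)
  have hUV : ContDiff ℝ ∞ (fun p => U p + V p) := hU'.add hV'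
  have hφ : ContDiff ℝ ∞ (phiF U M Y) :=
    (smooth_Dder hU' hY' hM').sub ((smooth_exp hU').mul (smooth_pθ hY'))
  have hψ : ContDiff ℝ ∞ (psiF U V Y) := smooth_Dder hU' hY' hUV
  have hDφ : ContDiff ℝ ∞ (Dder U Y (phiF U M Y)) := smooth_Dder hU' hY' hφ
  have hDψ : ContDiff ℝ ∞ (Dder U Y (psiF U V Y)) := smooth_Dder hU' hY' hψ
  intro x
  -- the hypothesis, rewritten pointwise
  have hyp : ∀ y : ℝ × ℝ × ℝ,
      pθ (phiF U M Y) y + pθ (psiF U V Y) y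
        = psiF U V Y y * (pθ U y + pθ V y) := by
    intro y
    have h1 : pθ (fun p => phiF U M Y p + psiF U V Y p) y
        = pθ (phiF U M Y) y + pθ (psiF U V Y) y := pθ_add hφ hψ
    have h2 : pθ (fun p => U p + V p) y = pθ U y + pθ V y := pθ_add hU' hV'
    rw [← h1, hYeq y, h2]
  have hfun : (fun y => pθ (phiF U M Y) y + pθ (psiF U V Y) y)
      = (fun y => psiF U V Y y * (pθ U y + pθ V y)) := funext hyp
  -- commutator applications
  have cφ : pθ (Dder U Y (phiF U M Y)) x
      = Dder U Y (pθ (phiF U M Y)) x + pθ U x * Dder U Y (phiF U M Y) x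
        + Real.exp (U x) * pθ Y x * pθ (phiF U M Y) x := pθ_Dder hU' hY' hφ
  have cψ : pθ (Dder U Y (psiF U V Y)) x
      = Dder U Y (pθ (psiF U V Y)) x + pθ U x * Dder U Y (psiF U V Y) x
        + Real.exp (U x) * pθ Y x * pθ (psiF U V Y) x := pθ_Dder hU' hY' hψ
  -- Dη applied to (φ+ψ)_θ = ψ(U+V)_θ
  have dadd : Dder U Y (pθ (phiF U M Y)) x + Dder U Y (pθ (psiF U V Y)) x
      = Dder U Y (fun y => pθ (phiF U M Y) y + pθ (psiF U V Y) y) x :=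
    (Dder_add hU' hY' (smooth_pθ hφ) (smooth_pθ hψ)).symm
  have dw : Dder U Y (fun y => pθ (phiF U M Y) y + pθ (psiF U V Y) y) x
      = Dder U Y (fun y => psiF U V Y y * (pθ U y + pθ V y)) x := by rw [hfun]
  have dmul : Dder U Y (fun y => psiF U V Y y * (pθ U y + pθ V y)) x
      = psiF U V Y x * Dder U Y (fun y => pθ U y + pθ V y) x
        + (pθ U x + pθ V x) * Dder U Y (psiF U V Y) x :=
    Dder_mul hU' hY' hψ ((smooth_pθ hU').add (smooth_pθ hV'))
  have hKsum : Dder U Y (pθ (phiF U M Y)) x + Dder U Y (pθ (psiF U V Y)) x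
      = psiF U V Y x * Dder U Y (fun y => pθ U y + pθ V y) x
        + (pθ U x + pθ V x) * Dder U Y (psiF U V Y) x := (dadd.trans dw).trans dmul
  -- Dη of (U+V)_θ via the commutator
  have dS : Dder U Y (fun y => pθ U y + pθ V y) x
      = pθ (psiF U V Y) x - pθ U x * psiF U V Y x
        - Real.exp (U x) * pθ Y x * (pθ U x + pθ V x) := by
    have h1 : pθ (Dder U Y (fun p => U p + V p)) x
        = Dder U Y (pθ (fun p => U p + V p)) x
          + pθ U x * Dder U Y (fun p => U p + V p) x
          + Real.exp (U x) * pθ Y x * pθ (fun p => U p + V p) x := pθ_Dder hU' hY' hUV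
    have h2 : pθ (fun p => U p + V p) = fun y => pθ U y + pθ V y :=
      funext fun y => pθ_add hU' hV'
    have h3 : Dder U Y (fun p => U p + V p) = psiF U V Y := rfl
    simp only [h2, h3] at h1
    linarith [h1]
  -- expand the θ-derivative of A
  rw [pθ_big hDφ hDψ hφ hψ, pθ_add hU' hV', cφ, cψ]
  linear_combination hKsum + psiF U V Y x * dS
    + (Real.exp (U x) * pθ Y x - phiF U M Y x - psiF U V Y x) * hyp x
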